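/- arXiv:2502.20094 — 3 statements merged into one kernel-verified Lean document; each statement's English description precedes it below -/
import Mathlib

section
/- Let W be a 3-dimensional complex vector space with a nondegenerate symmetric bilinear form κ, let E be a complex vector space, and let SO(W,κ) act on Hom(W,E) by precomposition, g·φ = φ ∘ g^{-1}. If φ ∈ Hom(W,E) has rank at least 2, then the stabilizer of φ in SO(W,κ) is trivial. -/
/-!
Since `φ ∘ g = φ`, the image of `g - 1` lies in `ker φ`, which has dimension at most `1`; so `g` is
a dilatransvection `x ↦ x + f x • w`. Its determinant is `1 + f w`, hence `f w = 0` and `g` is a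
transvection. Expanding `κ (g x) (g y) = κ x y` at `x, y ∈ {v, w}` with `f v = 1` gives
`κ w w = κ v w = 0`, and then `κ w = 0` on all of `W`; nondegeneracy forces `w = 0`.
-/

open Module LinearMap

theorem LinearMap.transvection_eq_id_of_isometry {K V : Type*} [Field K] [NeZero (2 : K)]
    [AddCommGroup V] [Module K V] (κ : V →ₗ[K] V →ₗ[K] K) (hsymm : ∀ x y : V, κ x y = κ y x)
    (hnd : ∀ x : V, (∀ y : V, κ x y = 0) → x = 0) {f : Dual K V} {w : V} (hfw : f w = 0)
    (hκ : ∀ x y : V, κ (transvection f w x) (transvection f w y) = κ x y) :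
    transvection f w = LinearMap.id := by
  by_cases hf : f = 0
  · rw [hf, transvection.of_left_eq_zero]
  obtain ⟨v, hv⟩ : ∃ v, f v = 1 := by
    obtain ⟨x, hx⟩ := DFunLike.ne_iff.mp hf
    exact ⟨(f x)⁻¹ • x, by rw [map_smul, smul_eq_mul, inv_mul_cancel₀ hx]⟩
  have expand : ∀ x y, f y * κ x w + f x * κ w y + f x * f y * κ w w = 0 := fun x y => by
    have := hκ x y
    simp only [transvection.apply, map_add, map_smul, LinearMap.add_apply,
      LinearMap.smul_apply, smul_eq_mul] at this
    linear_combination this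
  have hww : κ w w = 0 := by simpa [hfw, hv] using expand v w
  have hvw : κ v w = 0 := by
    have h2 : (2 : K) * κ v w = 0 := by
      have := expand v v
      rw [hv, hww, hsymm w v] at this
      linear_combination this
    simpa [two_ne_zero] using h2
  have hw : w = 0 := hnd w fun y => by simpa [hv, hvw, hww] using expand v y
  rw [hw, transvection.of_right_eq_zero]

theorem LinearEquiv.mem_dilatransvections_of_comp_eq {K V E : Type*} [Field K] [AddCommGroup V]
    [Module K V] [FiniteDimensional K V] [AddCommGroup E] [Module K E] {φ : V →ₗ[K] E}
    (hφ : finrank K (ker φ) ≤ 1) {e : V ≃ₗ[K] V} (he : φ ∘ₗ e = φ) :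
    e ∈ LinearEquiv.dilatransvections K V := by
  refine mem_dilatransvections_iff_finrank.mpr ((Submodule.finrank_mono ?_).trans hφ)
  rintro _ ⟨x, rfl⟩
  simpa [sub_eq_zero] using LinearMap.congr_fun he x

/-- Let `W` be a 3-dimensional complex vector space with a nondegenerate symmetric bilinear
form `κ`, and let `SO(W,κ)` act on `Hom(W,E)` by precomposition.  If `φ : W → E` has rank at
least `2`, then the stabilizer of `φ` in `SO(W,κ)` is trivial: any `g ∈ SO(W,κ)` with
`φ ∘ g = φ` is the identity. -/
theorem stabilizer_trivial_of_two_le_rank (W E : Type*)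
    [AddCommGroup W] [Module ℂ W] [FiniteDimensional ℂ W]
    (hdim : Module.finrank ℂ W = 3)
    [AddCommGroup E] [Module ℂ E]
    (κ : W →ₗ[ℂ] W →ₗ[ℂ] ℂ)
    (hsymm : ∀ x y : W, κ x y = κ y x)
    (hnd : ∀ x : W, (∀ y : W, κ x y = 0) → x = 0)
    (φ : W →ₗ[ℂ] E) (hrk : 2 ≤ LinearMap.rank φ)
    (g : W ≃ₗ[ℂ] W)
    (hκ : ∀ x y : W, κ (g x) (g y) = κ x y)
    (hdet : LinearMap.det (g : W →ₗ[ℂ] W) = 1)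
    (hstab : φ.comp (g : W →ₗ[ℂ] W) = φ) :
    g = LinearEquiv.refl ℂ W := by
  have hker : finrank ℂ (ker φ) ≤ 1 := by
    rw [LinearMap.rank, ← finrank_eq_rank] at hrk
    have := φ.finrank_range_add_finrank_ker
    have : 2 ≤ finrank ℂ (range φ) := by exact_mod_cast hrk
    omega
  obtain ⟨f, w, hg⟩ := LinearEquiv.mem_dilatransvections_of_comp_eq hker hstab
  have hfw : f w = 0 := by simpa [hg] using hdet
  have hid : transvection f w = LinearMap.id :=
    transvection_eq_id_of_isometry κ hsymm hnd hfw fun x y => by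
      rw [← hg]
      exact hκ x y
  exact LinearEquiv.toLinearMap_injective (hg.trans hid)
end

section
/- Let R → S be a flat ring homomorphism between integral domains such that nonzero elements of R map to nonzero elements of S. Then for any finitely generated R-module M, the natural map S ⊗_R (M/torsion(M)) → (S ⊗_R M)/torsion(S ⊗_R M) is an isomorphism. (Geometric form: for a flat morphism of integral schemes, pullback commutes with taking the torsion-free quotient of a coherent sheaf.) -/
/-!
Base change is right exact, so the kernel of `S ⊗ M → S ⊗ (M/T)` is the image of `S ⊗ T`, which
is torsion because nonzero elements of `R` stay nonzero in `S`. Conversely `S ⊗ (M/T)` is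
torsion-free: `M/T` is finitely generated and torsion-free, so multiplication by a suitable nonzero
scalar maps it injectively into the span of a maximal linearly independent family of generators,
a free module, and flatness carries this embedding over to `S ⊗ (M/T) ↪ S ⊗ Rⁿ ≅ Sⁿ`. Hence the
kernel is exactly the torsion submodule of `S ⊗ M`.
-/

open scoped TensorProduct nonZeroDivisors

open Submodule

theorem Submodule.exists_smul_mem_of_isTorsion_quotient {R N : Type*} [CommRing R] [AddCommGroup N]
    [Module R N] [Module.Finite R N] {P : Submodule R N} (hP : Module.IsTorsion R (N ⧸ P)) :
    ∃ a ∈ R⁰, ∀ x : N, a • x ∈ P := by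
  obtain ⟨a, ha, ha0⟩ := annihilator_top_inter_nonZeroDivisors hP
  refine ⟨a, ha0, fun x => ?_⟩
  rw [← Quotient.mk_eq_zero, Quotient.mk_smul]
  exact Submodule.mem_annihilator.mp ha _ mem_top

theorem Module.exists_injective_finsupp_of_isTorsionFree (R N : Type*) [CommRing R] [IsDomain R]
    [AddCommGroup N] [Module R N] [Module.Finite R N] [Module.IsTorsionFree R N] :
    ∃ (ι : Type) (f : N →ₗ[R] ι →₀ R), Function.Injective f := by
  obtain ⟨n, s, hs⟩ := Module.Finite.exists_fin (R := R) (M := N)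
  obtain ⟨I, hI, hmax⟩ := exists_maximal_linearIndepOn R s
  set P := span R (Set.range fun i : I => s i)
  have hP : ⊤ ≤ torsion R (N ⧸ P) := by
    rw [← range_mkQ P, LinearMap.range_eq_map, ← hs, map_span, span_le]
    rintro _ ⟨_, ⟨i, rfl⟩, rfl⟩
    by_cases hi : i ∈ I
    · rw [SetLike.mem_coe, mkQ_apply, (Quotient.mk_eq_zero P).mpr (subset_span ⟨⟨i, hi⟩, rfl⟩)]
      exact zero_mem _
    · obtain ⟨b, hb, hbs⟩ := hmax i hi
      rw [Set.image_eq_range] at hbs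
      refine (mem_torsion_iff _).mpr ⟨⟨b, mem_nonZeroDivisors_of_ne_zero hb⟩, ?_⟩
      rw [Submonoid.mk_smul, mkQ_apply, ← Quotient.mk_smul, Quotient.mk_eq_zero]
      exact hbs
  obtain ⟨a, ha, haP⟩ := exists_smul_mem_of_isTorsion_quotient
    fun x => (mem_torsion_iff x).mp (hP mem_top)
  refine ⟨I, hI.repr ∘ₗ (LinearMap.lsmul R N a).codRestrict P haP, ?_⟩
  refine (LinearMap.ker_eq_bot.mp hI.repr_ker).comp fun x y hxy => ?_
  exact smul_right_injective N (nonZeroDivisors.ne_zero ha) (congrArg Subtype.val hxy)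

theorem Module.isTorsionFree_tensorProduct_of_flat (R S N : Type*) [CommRing R] [IsDomain R]
    [CommRing S] [IsDomain S] [Algebra R S] [Module.Flat R S]
    [AddCommGroup N] [Module R N] [Module.Finite R N] [Module.IsTorsionFree R N] :
    Module.IsTorsionFree S (S ⊗[R] N) := by
  classical
  obtain ⟨ι, f, hf⟩ := Module.exists_injective_finsupp_of_isTorsionFree R N
  let g : S ⊗[R] N →ₗ[S] ι →₀ S :=
    (TensorProduct.finsuppScalarRight R S S ι).toLinearMap ∘ₗ f.baseChange S
  have hg : Function.Injective g := by
    refine (TensorProduct.finsuppScalarRight R S S ι).injective.comp ?_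
    rw [LinearMap.baseChange_eq_ltensor]
    exact Module.Flat.lTensor_preserves_injective_linearMap f hf
  exact hg.moduleIsTorsionFree g (map_smul g)

theorem Submodule.ker_baseChange_torsion_mkQ_le {R S M : Type*} [CommRing R] [CommRing S]
    [Algebra R S] [AddCommGroup M] [Module R M]
    (h : ∀ r ∈ R⁰, algebraMap R S r ∈ S⁰) :
    LinearMap.ker ((torsion R M).mkQ.baseChange S) ≤ torsion S (S ⊗[R] M) := by
  intro x hx
  rw [LinearMap.mem_ker, LinearMap.baseChange_eq_ltensor, ← LinearMap.mem_ker, lTensor_mkQ] at hx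
  obtain ⟨y, rfl⟩ := hx
  induction y using TensorProduct.induction_on with
  | zero => simp
  | tmul s m =>
    obtain ⟨a, ha⟩ := (mem_torsion_iff _).mp m.2
    refine (mem_torsion_iff _).mpr ⟨⟨algebraMap R S a, h a a.2⟩, ?_⟩
    rw [Submonoid.mk_smul, LinearMap.lTensor_tmul, algebraMap_smul, ← TensorProduct.tmul_smul,
      subtype_apply, ← Submonoid.smul_def, ha, TensorProduct.tmul_zero]
  | add u v hu hv => rw [map_add]; exact add_mem hu hv

theorem LinearMap.ker_eq_torsion_of_isTorsionFree {S X Y : Type*} [CommRing S] [AddCommGroup X]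
    [Module S X] [AddCommGroup Y] [Module S Y] [Module.IsTorsionFree S Y] {f : X →ₗ[S] Y}
    (hf : LinearMap.ker f ≤ torsion S X) : LinearMap.ker f = torsion S X := by
  refine le_antisymm hf fun x hx => ?_
  obtain ⟨a, ha⟩ := (mem_torsion_iff _).mp hx
  have hfx : (a : S) • f x = 0 := by rw [← map_smul, ← Submonoid.smul_def, ha, map_zero]
  exact (isRegular_iff_mem_nonZeroDivisors.mpr a.2).smul_eq_zero_iff_right.mp hfx

/-- Pullback along a flat morphism of integral schemes commutes with the torsion-free
quotient: if `R → S` is a flat ring map of integral domains sending nonzero elements to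
nonzero elements and `M` is a finitely generated `R`-module, then the natural map
`S ⊗_R (M/torsion(M)) → (S ⊗_R M)/torsion(S ⊗_R M)` is an isomorphism. -/
theorem baseChange_torsionFree_quotient
    (R S M : Type*) [CommRing R] [IsDomain R] [CommRing S] [IsDomain S]
    [Algebra R S] [Module.Flat R S]
    (hinj : ∀ r : R, r ≠ 0 → algebraMap R S r ≠ 0)
    [AddCommGroup M] [Module R M] [Module.Finite R M] :
    ∃ e : (S ⊗[R] (M ⧸ Submodule.torsion R M)) ≃ₗ[S]
        ((S ⊗[R] M) ⧸ Submodule.torsion S (S ⊗[R] M)),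
      ∀ x : S ⊗[R] M,
        e (LinearMap.baseChange S (Submodule.torsion R M).mkQ x) =
          (Submodule.torsion S (S ⊗[R] M)).mkQ x := by
  let f := (torsion R M).mkQ.baseChange S
  have hf : Function.Surjective f := LinearMap.baseChange_surjective S (mkQ_surjective _)
  have := Module.isTorsionFree_tensorProduct_of_flat R S (M ⧸ torsion R M)
  have hker : LinearMap.ker f = torsion S (S ⊗[R] M) :=
    LinearMap.ker_eq_torsion_of_isTorsionFree <| ker_baseChange_torsion_mkQ_le fun r hr =>
      mem_nonZeroDivisors_of_ne_zero (hinj r (nonZeroDivisors.ne_zero hr))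
  refine ⟨(f.quotKerEquivOfSurjective hf).symm ≪≫ₗ quotEquivOfEq _ _ hker, fun x => ?_⟩
  rw [LinearEquiv.trans_apply, LinearMap.quotKerEquivOfSurjective_symm_apply, quotEquivOfEq_mk,
    mkQ_apply]
end

section
/- Let g_1,…,g_r ∈ C[u_2,…,u_n] and set S = C[u_2,…,u_n]/(g_1,…,g_r) and R = S[x_1]. Let M = (R·dx_1 ⊕ ⊕_{l=2}^n R·du_l)/Σ_k R·dg_k, and let ξ: R^n → M be the R-linear map sending the first basis vector to dx_1 and the l-th basis vector (l ≥ 2) to x_1·du_l + u_l·dx_1. Then the cokernel of ξ is isomorphic, as an R-module, to the module of Kähler differentials Ω¹_{S/C} = (⊕_{l=2}^n S·du_l)/Σ_k S·dg_k, with R acting through R → R/(x_1) = S. -/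
noncomputable section

/-- `S = ℂ[u_1,…,u_m]/(g_1,…,g_r)` (the exceptional divisor chart ring). -/
abbrev chartS (m r : ℕ) (g : Fin r → MvPolynomial (Fin m) ℂ) :=
  MvPolynomial (Fin m) ℂ ⧸ Ideal.span (Set.range g)

/-- `R = S[x₁]`. -/
abbrev chartR (m r : ℕ) (g : Fin r → MvPolynomial (Fin m) ℂ) :=
  Polynomial (chartS m r g)

/-- The submodule of relations `Σ_k R·dg_k` inside the free module `R·dx₁ ⊕ ⊕_l R·du_l`,
where `dg_k = Σ_l (∂g_k/∂u_l) du_l`. -/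
def chartRel (m r : ℕ) (g : Fin r → MvPolynomial (Fin m) ℂ) :
    Submodule (chartR m r g) (chartR m r g × (Fin m → chartR m r g)) :=
  Submodule.span _ (Set.range fun k : Fin r =>
    ((0 : chartR m r g), fun l : Fin m =>
      Polynomial.C (Ideal.Quotient.mk (Ideal.span (Set.range g))
        (MvPolynomial.pderiv l (g k)))))

/-- `M = (R·dx₁ ⊕ ⊕_l R·du_l)/Σ_k R·dg_k`. -/
abbrev chartM (m r : ℕ) (g : Fin r → MvPolynomial (Fin m) ℂ) :=
  (chartR m r g × (Fin m → chartR m r g)) ⧸ chartRel m r g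

/-- `Ω¹_{S/ℂ} = (⊕_l S·du_l)/Σ_k S·dg_k`. -/
abbrev chartOmegaS (m r : ℕ) (g : Fin r → MvPolynomial (Fin m) ℂ) :=
  (Fin m → chartS m r g) ⧸
    Submodule.span (chartS m r g) (Set.range fun k : Fin r => fun l : Fin m =>
      Ideal.Quotient.mk (Ideal.span (Set.range g)) (MvPolynomial.pderiv l (g k)))

/-!
Evaluating at `x₁ = 0` and dropping the `dx₁`-component kills the relations `dg_k`, so it gives
a surjection `M → Ω¹_{S/ℂ}`. Its kernel is spanned by `dx₁` and the `x₁ du_l`, since every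
`b ∈ R` is `b(0) + x₁ · (b / x₁)`; modulo `dx₁` these are exactly the images
`x₁ du_l + u_l dx₁` of `ξ`, so the kernel is the image of `ξ`.
-/

open Polynomial

theorem LinearMap.range_eq_span_range_single {R M ι : Type*} [Semiring R] [AddCommMonoid M]
    [Module R M] [Finite ι] [DecidableEq ι] (f : (ι → R) →ₗ[R] M) :
    range f = Submodule.span R (Set.range fun i => f (Pi.single i 1)) := by
  rw [range_eq_map, ← (Pi.basisFun R ι).span_eq, Submodule.map_span, ← Set.range_comp]
  simp [Function.comp_def]

theorem LinearMap.range_eq_span_insert_fin_succ {R M : Type*} [Semiring R] [AddCommMonoid M]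
    [Module R M] {n : ℕ} (f : (Fin (n + 1) → R) →ₗ[R] M) :
    range f = Submodule.span R
      (insert (f (Pi.single 0 1)) (Set.range fun i : Fin n => f (Pi.single i.succ 1))) := by
  rw [range_eq_span_range_single, Fin.range_fin_succ]
  rfl

theorem LinearMap.nonempty_quotEquiv_compHom_of_surjective {R S M Q : Type*} [Ring R] [Ring S]
    [AddCommGroup M] [Module R M] [AddCommGroup Q] [Module S Q] {σ : R →+* S}
    {f : M →ₛₗ[σ] Q} (hf : Function.Surjective f) {p : Submodule R M} (hp : ker f = p) :
    letI := Module.compHom Q σ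
    Nonempty ((M ⧸ p) ≃ₗ[R] Q) := by
  let := Module.compHom Q σ
  let f' : M →ₗ[R] Q := { f with map_smul' := f.map_smulₛₗ }
  exact ⟨(Submodule.quotEquivOfEq _ _ hp.symm).trans (f'.quotKerEquivOfSurjective hf)⟩

section

variable {S ι κ : Type*} [CommRing S]

def relSpan (v : κ → ι → S) : Submodule S[X] (S[X] × (ι → S[X])) :=
  Submodule.span S[X] (Set.range fun k => ((0 : S[X]), fun l => C (v k l)))

/-- Restriction of `a dx₁ + Σ_l b_l du_l` to the divisor `x₁ = 0`, where `dx₁` vanishes. -/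
def restrictToDivisor (N : Submodule S (ι → S)) :
    S[X] × (ι → S[X]) →ₛₗ[evalRingHom (0 : S)] (ι → S) ⧸ N where
  toFun p := N.mkQ fun l => (p.2 l).eval 0
  map_add' p q := by simp only [Prod.snd_add, Pi.add_apply, eval_add]; rfl
  map_smul' c p := by simp only [Prod.smul_snd, Pi.smul_apply, smul_eq_mul, eval_mul]; rfl

@[simp]
theorem restrictToDivisor_apply (N : Submodule S (ι → S)) (a : S[X]) (b : ι → S[X]) :
    restrictToDivisor N (a, b) = N.mkQ fun l => (b l).eval 0 :=
  rfl

theorem restrictToDivisor_surjective (N : Submodule S (ι → S)) :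
    Function.Surjective (restrictToDivisor N) := by
  intro y
  obtain ⟨w, rfl⟩ := N.mkQ_surjective y
  exact ⟨(0, fun l => C (w l)), by simp⟩

theorem const_mem_relSpan (v : κ → ι → S) {w : ι → S}
    (hw : w ∈ Submodule.span S (Set.range v)) :
    ((0 : S[X]), fun l => C (w l)) ∈ relSpan v := by
  let Φ : (ι → S) →ₗ[S] S[X] × (ι → S[X]) :=
    LinearMap.inr S _ _ ∘ₗ (Algebra.linearMap S S[X]).compLeft ι
  have hspan : Submodule.span S (Set.range v) ≤ ((relSpan v).restrictScalars S).comap Φ :=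
    Submodule.span_le.2 (by rintro _ ⟨k, rfl⟩; exact Submodule.subset_span ⟨k, rfl⟩)
  exact hspan hw

theorem relSpan_le_ker_restrictToDivisor (v : κ → ι → S) :
    relSpan v ≤ LinearMap.ker (restrictToDivisor (Submodule.span S (Set.range v))) := by
  refine Submodule.span_le.2 ?_
  rintro _ ⟨k, rfl⟩
  simpa using Submodule.subset_span (Set.mem_range_self k)

def restrictToDivisorQuot (v : κ → ι → S) :
    (S[X] × (ι → S[X])) ⧸ relSpan v →ₛₗ[evalRingHom (0 : S)]
      (ι → S) ⧸ Submodule.span S (Set.range v) :=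
  (relSpan v).liftQ _ (relSpan_le_ker_restrictToDivisor v)

theorem restrictToDivisorQuot_surjective (v : κ → ι → S) :
    Function.Surjective (restrictToDivisorQuot v) := by
  intro y
  obtain ⟨p, rfl⟩ := restrictToDivisor_surjective _ y
  exact ⟨Submodule.Quotient.mk p, rfl⟩

variable [DecidableEq ι]

/-- The images of the standard basis under `ξ`: `dx₁` and `c_l dx₁ + x₁ du_l`. -/
def xiGens (v : κ → ι → S) (c : ι → S) : Set ((S[X] × (ι → S[X])) ⧸ relSpan v) :=
  insert (Submodule.Quotient.mk (1, 0))
    (Set.range fun l => Submodule.Quotient.mk (C (c l), Pi.single l X))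

theorem mk_single_X_mem_span_xiGens (v : κ → ι → S) (c : ι → S) (l : ι) :
    Submodule.Quotient.mk ((0 : S[X]), Pi.single l X) ∈ Submodule.span S[X] (xiGens v c) := by
  have h : Submodule.Quotient.mk (p := relSpan v) ((0 : S[X]), Pi.single l X) =
      Submodule.Quotient.mk (C (c l), Pi.single l X) -
        C (c l) • Submodule.Quotient.mk (1, 0) := by
    rw [← Submodule.Quotient.mk_smul, ← Submodule.Quotient.mk_sub]
    simp [Prod.smul_def]
  rw [h]
  exact sub_mem (Submodule.subset_span (Set.mem_insert_of_mem _ ⟨l, rfl⟩))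
    (Submodule.smul_mem _ _ (Submodule.subset_span (Set.mem_insert _ _)))

theorem span_xiGens_le_ker (v : κ → ι → S) (c : ι → S) :
    Submodule.span S[X] (xiGens v c) ≤ LinearMap.ker (restrictToDivisorQuot v) := by
  rw [Submodule.span_le, xiGens, Set.insert_subset_iff]
  refine ⟨?_, Set.range_subset_iff.2 fun l => ?_⟩ <;>
    simp only [SetLike.mem_coe, LinearMap.mem_ker, restrictToDivisorQuot,
      Submodule.liftQ_apply, restrictToDivisor_apply]
  · simp only [Pi.zero_apply, eval_zero]
    exact map_zero _
  · simp only [Pi.apply_single (fun _ => eval (0 : S)) (fun _ => eval_zero), eval_X,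
      Pi.single_zero]
    exact map_zero _

variable [Fintype ι]

theorem prod_eq_smul_add_sum_divX_add_C (a : S[X]) (b : ι → S[X]) :
    (a, b) = a • ((1 : S[X]), (0 : ι → S[X]))
      + ∑ l, divX (b l) • ((0 : S[X]), Pi.single l X)
      + ((0 : S[X]), fun l => C ((b l).eval 0)) := by
  refine Prod.ext (by simp [Prod.fst_sum]) (funext fun l => ?_)
  simp [Prod.snd_sum, Finset.sum_apply, Pi.single_apply, ← coeff_zero_eq_eval_zero,
    divX_mul_X_add]

theorem ker_le_span_xiGens (v : κ → ι → S) (c : ι → S) :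
    LinearMap.ker (restrictToDivisorQuot v) ≤ Submodule.span S[X] (xiGens v c) := by
  intro x hx
  obtain ⟨⟨a, b⟩, rfl⟩ := Submodule.Quotient.mk_surjective _ x
  have hb : (fun l => (b l).eval 0) ∈ Submodule.span S (Set.range v) := by
    simpa [restrictToDivisorQuot, Submodule.Quotient.mk_eq_zero] using hx
  have hab : Submodule.Quotient.mk (p := relSpan v) (a, b) =
      a • Submodule.Quotient.mk (1, 0) +
        ∑ l, divX (b l) • Submodule.Quotient.mk ((0 : S[X]), Pi.single l X) := by
    have h := congrArg (relSpan v).mkQ (prod_eq_smul_add_sum_divX_add_C a b)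
    rwa [map_add, map_add, Submodule.mkQ_apply _ (0, _),
      (Submodule.Quotient.mk_eq_zero _).2 (const_mem_relSpan v hb), add_zero, map_smul,
      map_sum] at h
  rw [hab]
  exact add_mem (Submodule.smul_mem _ _ (Submodule.subset_span (Set.mem_insert _ _)))
    (Submodule.sum_mem _ fun l _ => Submodule.smul_mem _ _ (mk_single_X_mem_span_xiGens v c l))

theorem ker_restrictToDivisorQuot (v : κ → ι → S) (c : ι → S) :
    LinearMap.ker (restrictToDivisorQuot v) = Submodule.span S[X] (xiGens v c) :=
  le_antisymm (ker_le_span_xiGens v c) (span_xiGens_le_ker v c)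

end

/-- Let `S = ℂ[u]/(g_k)`, `R = S[x₁]`, `M = (R·dx₁ ⊕ ⊕ R·du_l)/Σ R·dg_k`, and let
`ξ : Rⁿ → M` (`n = m+1`) send the first basis vector to `dx₁` and the `l`-th to
`x₁·du_l + u_l·dx₁`.  Then `coker ξ ≅ Ω¹_{S/ℂ} = (⊕ S·du_l)/Σ S·dg_k` as `R`-modules,
`R` acting on the latter through `R → R/(x₁) = S` (evaluation at `0`). -/
theorem coker_xi_iso_kaehler (m r : ℕ) (g : Fin r → MvPolynomial (Fin m) ℂ)
    (ξ : (Fin (m + 1) → chartR m r g) →ₗ[chartR m r g] chartM m r g)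
    (hξ0 : ξ (Pi.single 0 1) = Submodule.Quotient.mk ((1 : chartR m r g), 0))
    (hξs : ∀ l : Fin m,
      ξ (Pi.single l.succ 1) =
        Submodule.Quotient.mk
          (Polynomial.C (Ideal.Quotient.mk (Ideal.span (Set.range g)) (MvPolynomial.X l)),
            Pi.single l Polynomial.X)) :
    letI : Module (chartR m r g) (chartOmegaS m r g) :=
      Module.compHom _ (Polynomial.evalRingHom (0 : chartS m r g))
    Nonempty ((chartM m r g ⧸ LinearMap.range ξ) ≃ₗ[chartR m r g] chartOmegaS m r g) := by
  let dg : Fin r → Fin m → chartS m r g := fun k l =>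
    Ideal.Quotient.mk (Ideal.span (Set.range g)) (MvPolynomial.pderiv l (g k))
  let ψ : chartM m r g →ₛₗ[Polynomial.evalRingHom (0 : chartS m r g)] chartOmegaS m r g :=
    restrictToDivisorQuot dg
  have hker : LinearMap.ker ψ = LinearMap.range ξ := by
    rw [LinearMap.range_eq_span_insert_fin_succ ξ, hξ0]
    simp_rw [hξs]
    exact ker_restrictToDivisorQuot dg fun l => Ideal.Quotient.mk _ (MvPolynomial.X l)
  exact LinearMap.nonempty_quotEquiv_compHom_of_surjective
    (restrictToDivisorQuot_surjective dg) hker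
end
end
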